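/- Let A = k{x,y} be the differential polynomial algebra in two variables over a differential field k of characteristic 0, and C = Af_2(A) ∩ Tr_2(A). Then the set B_0 of automorphisms (x,y) ↦ (x + q(y), y), where q(y) ∈ k{y} is a differential polynomial all of whose homogeneous components have degree at least 2 (with respect to the degree function giving y^θ degree 1 + |θ|), is a complete and irredundant system of representatives for the left cosets of C in the triangular group Tr_2(A). -/

import Mathlib

/-!
A triangular `ψ = (a x + f(y), b y + c)` equals `β * μ` with `β = (x + q(y), y)` and
`μ = (a x + f₁ y + f₀, b y + c) ∈ C`, where `f₀ + f₁ y` is the part of `f` of degree `< 2` and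
`q = (f - f₀ - f₁ y) / a`. The maps `(x + q(y), y)`, `q ∈ k{y}`, form a group isomorphic to
`(k{y}, +)`. For uniqueness, `β * μ = β' * μ'` evaluated at `x` makes `a q - a' q'` affine; since
`x` and `y` are the only variables of degree `< 2`, an affine polynomial without components of
degree `< 2` is zero, so `a = a'` and `q = q'`.
-/

open MvPolynomial

/-- The free commutative monoid of derivative operators on `m` derivations. -/
abbrev DOp (m : ℕ) := Fin m →₀ ℕ

/-- The differential polynomial algebra `k{x_1,…,x_n}` with `m` commuting derivations:
the polynomial algebra on the variables `x_i^θ`. -/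
abbrev DiffPoly (k : Type) [CommRing k] (n m : ℕ) := MvPolynomial (Fin n × DOp m) k

/-- The `i`-th derivation `δ_i` of `k{x_1,…,x_n}`, with `δ_i (x_j^θ) = x_j^{θ δ_i}`. -/
noncomputable def der (k : Type) [CommRing k] (n m : ℕ) (i : Fin m) :
    Derivation k (DiffPoly k n m) (DiffPoly k n m) :=
  MvPolynomial.mkDerivation k fun p => X (p.1, p.2 + Finsupp.single i 1)

/-- Application of a derivative operator `θ = δ_1^{i_1} ⋯ δ_m^{i_m}`. -/
noncomputable def applyOp {k : Type} [CommRing k] {n m : ℕ} (θ : DOp m)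
    (f : DiffPoly k n m) : DiffPoly k n m :=
  Fin.foldr m (fun i g => (⇑(der k n m i))^[θ i] g) f

/-- The differential subalgebra generated by a set: the smallest subalgebra containing it
and closed under all the derivations. -/
noncomputable def diffAdjoin (k : Type) [CommRing k] {n m : ℕ} (S : Set (DiffPoly k n m)) :
    Subalgebra k (DiffPoly k n m) :=
  sInf {T | S ⊆ T ∧ ∀ i : Fin m, ∀ x ∈ T, der k n m i x ∈ T}

/-- The weight of the variable `x_j^θ`: `1 + |θ|`. -/
def dwt (n m : ℕ) : Fin n × DOp m → ℕ := fun p => 1 + p.2.sum fun _ v => v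

/-- The degree of a differential polynomial. -/
noncomputable def ddeg {k : Type} [CommRing k] {n m : ℕ} (f : DiffPoly k n m) : ℕ :=
  weightedTotalDegree (dwt n m) f

/-- The highest homogeneous part of a differential polynomial. -/
noncomputable def dtop {k : Type} [CommRing k] {n m : ℕ} (f : DiffPoly k n m) :
    DiffPoly k n m :=
  weightedHomogeneousComponent (dwt n m) (ddeg f) f

/-- The variable `x` of `k{x,y}`. -/
noncomputable def xx (k : Type) [CommRing k] (m : ℕ) : DiffPoly k 2 m := X (0, 0)

/-- The variable `y` of `k{x,y}`. -/
noncomputable def yy (k : Type) [CommRing k] (m : ℕ) : DiffPoly k 2 m := X (1, 0)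

/-- A differential automorphism: an algebra automorphism commuting with all derivations. -/
def IsDiffAut {k : Type} [CommRing k] {m : ℕ}
    (φ : DiffPoly k 2 m ≃ₐ[k] DiffPoly k 2 m) : Prop :=
  ∀ i x, φ (der k 2 m i x) = der k 2 m i (φ x)

/-- An elementary automorphism: of the form `(a x + f(y), y)` or `(x, b y + g(x))`. -/
def IsElementary {k : Type} [CommRing k] {m : ℕ}
    (φ : DiffPoly k 2 m ≃ₐ[k] DiffPoly k 2 m) : Prop :=
  IsDiffAut φ ∧
    ((∃ a : k, a ≠ 0 ∧ ∃ f ∈ diffAdjoin k {yy k m},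
        φ (xx k m) = C a * xx k m + f ∧ φ (yy k m) = yy k m) ∨
     (∃ b : k, b ≠ 0 ∧ ∃ g ∈ diffAdjoin k {xx k m},
        φ (yy k m) = C b * yy k m + g ∧ φ (xx k m) = xx k m))

/-- A tame automorphism: a composition of elementary automorphisms. -/
def IsTame {k : Type} [CommRing k] {m : ℕ}
    (φ : DiffPoly k 2 m ≃ₐ[k] DiffPoly k 2 m) : Prop :=
  φ ∈ Subgroup.closure {ψ | IsElementary ψ}

/-- An affine automorphism `(a₁x + b₁y + c₁, a₂x + b₂y + c₂)`. -/
def IsAffine {k : Type} [CommRing k] {m : ℕ}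
    (φ : DiffPoly k 2 m ≃ₐ[k] DiffPoly k 2 m) : Prop :=
  IsDiffAut φ ∧ ∃ a₁ b₁ c₁ a₂ b₂ c₂ : k, a₁ * b₂ ≠ a₂ * b₁ ∧
    φ (xx k m) = C a₁ * xx k m + C b₁ * yy k m + C c₁ ∧
    φ (yy k m) = C a₂ * xx k m + C b₂ * yy k m + C c₂

/-- A triangular automorphism `(a x + f(y), b y + c)`. -/
def IsTriangular {k : Type} [CommRing k] {m : ℕ}
    (φ : DiffPoly k 2 m ≃ₐ[k] DiffPoly k 2 m) : Prop :=
  IsDiffAut φ ∧ ∃ a b c : k, a ≠ 0 ∧ b ≠ 0 ∧ ∃ f ∈ diffAdjoin k {yy k m},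
    φ (xx k m) = C a * xx k m + f ∧ φ (yy k m) = C b * yy k m + C c

/-- Membership in `C = Af₂(A) ∩ Tr₂(A)`. -/
def InC {k : Type} [CommRing k] {m : ℕ}
    (φ : DiffPoly k 2 m ≃ₐ[k] DiffPoly k 2 m) : Prop :=
  IsAffine φ ∧ IsTriangular φ

/-- Membership in the set `A₀ = {id} ∪ {(y, x + a y) : a ∈ k}` of coset representatives. -/
def InA0 {k : Type} [CommRing k] {m : ℕ}
    (φ : DiffPoly k 2 m ≃ₐ[k] DiffPoly k 2 m) : Prop :=
  IsDiffAut φ ∧ (φ = 1 ∨ ∃ a : k,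
    φ (xx k m) = yy k m ∧ φ (yy k m) = xx k m + C a * yy k m)

/-- Membership in the set `B₀ = {(x + q(y), y)}`, all homogeneous components of `q` of
degree at least `2`, of coset representatives. -/
def InB0 {k : Type} [CommRing k] {m : ℕ}
    (φ : DiffPoly k 2 m ≃ₐ[k] DiffPoly k 2 m) : Prop :=
  IsDiffAut φ ∧ ∃ q ∈ diffAdjoin k {yy k m},
    (∀ d : ℕ, d < 2 → weightedHomogeneousComponent (dwt 2 m) d q = 0) ∧
    φ (xx k m) = xx k m + q ∧ φ (yy k m) = yy k m

theorem Fin.foldr_iterate_of_eq_succ {α : Type*} {n : ℕ} (f : Fin n → α → α)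
    (hf : ∀ i j, Function.Commute (f i) (f j)) {e e' : Fin n → ℕ} {i : Fin n}
    (hi : e' i = e i + 1) (he : ∀ j, j ≠ i → e' j = e j) (x : α) :
    Fin.foldr n (fun j y => (f j)^[e' j] y) x = f i (Fin.foldr n (fun j y => (f j)^[e j] y) x) := by
  induction n with
  | zero => exact i.elim0
  | succ n ih =>
    simp only [Fin.foldr_succ]
    cases i using Fin.cases with
    | zero =>
      have htail : ∀ j : Fin n, e' j.succ = e j.succ := fun j => he _ (Fin.succ_ne_zero j)
      simp only [hi, htail, Function.iterate_succ_apply']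
    | succ i =>
      rw [he 0 (Fin.succ_ne_zero i).symm, ih (fun j => f j.succ) (fun j j' => hf _ _) hi
        (fun j hj => he _ (Fin.succ_injective _ |>.ne hj))]
      exact (hf 0 i.succ).iterate_left (e 0) _

theorem Finsupp.induction_add_single_one {α : Type*} {P : (α →₀ ℕ) → Prop} (h0 : P 0)
    (hstep : ∀ θ i, P θ → P (θ + Finsupp.single i 1)) (θ : α →₀ ℕ) : P θ := by
  induction θ using Finsupp.induction with
  | zero => exact h0
  | single_add i b θ hi hb ih =>
    clear hi hb
    induction b with
    | zero => simpa using ih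
    | succ b ihb =>
      rw [Finsupp.single_add, add_right_comm]
      exact hstep _ i ihb

theorem forall_weightedHomogeneousComponent_eq_zero_iff {σ R : Type*} [CommSemiring R]
    (w : σ → ℕ) (N : ℕ) (p : MvPolynomial σ R) :
    (∀ d < N, weightedHomogeneousComponent w d p = 0) ↔
      ∀ s, Finsupp.weight w s < N → coeff s p = 0 := by
  classical
  constructor
  · intro h s hs
    simpa [coeff_weightedHomogeneousComponent] using congrArg (coeff s) (h _ hs)
  · intro h d hd
    ext s
    rw [coeff_weightedHomogeneousComponent, coeff_zero]
    split_ifs with hs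
    exacts [h s (hs ▸ hd), rfl]

theorem coeff_eq_zero_of_mem_supported {σ R : Type*} [CommSemiring R] {S : Set σ}
    {f : MvPolynomial σ R} (hf : f ∈ supported R S) {s : σ →₀ ℕ} {i : σ} (hi : s i ≠ 0)
    (hiS : i ∉ S) : coeff s f = 0 := by
  by_contra h
  exact hiS (mem_supported.mp hf ((mem_vars_iff_mem_support i).mpr
    ⟨s, mem_support_iff.mpr h, Finsupp.mem_support_iff.mpr hi⟩))

section DiffPoly

variable {k : Type} [CommRing k] {n m : ℕ}

theorem der_X (i : Fin m) (p : Fin n × DOp m) :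
    der k n m i (X p) = X (p.1, p.2 + Finsupp.single i 1) :=
  mkDerivation_X _ _ _

theorem der_C (i : Fin m) (a : k) : der k n m i (C a) = 0 :=
  (der k n m i).map_algebraMap a

theorem der_comm (i j : Fin m) : Function.Commute (der k n m i) (der k n m j) := by
  have h : ⁅der k n m i, der k n m j⁆ = 0 := by
    refine derivation_ext fun p => ?_
    simp only [Derivation.commutator_apply, der_X, Derivation.zero_apply, add_right_comm p.2,
      sub_self]
  exact fun f => sub_eq_zero.mp (congrArg (· f) h)

theorem applyOp_zero (f : DiffPoly k n m) : applyOp 0 f = f := by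
  simp [applyOp, Fin.foldr_eq_foldr_finRange]

theorem applyOp_add_single (θ : DOp m) (i : Fin m) (f : DiffPoly k n m) :
    applyOp (θ + Finsupp.single i 1) f = der k n m i (applyOp θ f) :=
  Fin.foldr_iterate_of_eq_succ (fun i => der k n m i) der_comm (by simp)
    (fun j hj => by simp [hj.symm]) f

theorem applyOp_X (θ : DOp m) (j : Fin n) (σ : DOp m) :
    applyOp θ (X (j, σ) : DiffPoly k n m) = X (j, σ + θ) := by
  induction θ using Finsupp.induction_add_single_one with
  | h0 => rw [applyOp_zero, add_zero]
  | hstep θ i ih => rw [applyOp_add_single, ih, der_X, add_assoc]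

def IsDifferential (g : DiffPoly k n m → DiffPoly k n m) : Prop :=
  ∀ i f, g (der k n m i f) = der k n m i (g f)

theorem IsDifferential.comp {g h : DiffPoly k n m → DiffPoly k n m} (hg : IsDifferential g)
    (hh : IsDifferential h) : IsDifferential (g ∘ h) :=
  fun i f => by simp only [Function.comp_apply, hh i f, hg i (h f)]

theorem IsDifferential.map_applyOp {g : DiffPoly k n m → DiffPoly k n m} (hg : IsDifferential g)
    (θ : DOp m) (f : DiffPoly k n m) : g (applyOp θ f) = applyOp θ (g f) := by
  induction θ using Finsupp.induction_add_single_one with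
  | h0 => rw [applyOp_zero, applyOp_zero]
  | hstep θ i ih => rw [applyOp_add_single, applyOp_add_single, hg, ih]

theorem algHom_ext_of_isDifferential {φ ψ : DiffPoly k n m →ₐ[k] DiffPoly k n m}
    (hφ : IsDifferential φ) (hψ : IsDifferential ψ) (h : ∀ j, φ (X (j, 0)) = ψ (X (j, 0))) :
    φ = ψ := by
  refine algHom_ext fun ⟨j, θ⟩ => ?_
  have hX : (X (j, θ) : DiffPoly k n m) = applyOp θ (X (j, 0)) := by rw [applyOp_X, zero_add]
  rw [hX, hφ.map_applyOp, hψ.map_applyOp, h]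

noncomputable def diffSubst (P : Fin n → DiffPoly k n m) : DiffPoly k n m →ₐ[k] DiffPoly k n m :=
  aeval fun p => applyOp p.2 (P p.1)

theorem diffSubst_X (P : Fin n → DiffPoly k n m) (p : Fin n × DOp m) :
    diffSubst P (X p) = applyOp p.2 (P p.1) :=
  aeval_X _ p

theorem diffSubst_X_zero (P : Fin n → DiffPoly k n m) (j : Fin n) :
    diffSubst P (X (j, 0)) = P j := by
  rw [diffSubst_X, applyOp_zero]

theorem isDifferential_diffSubst (P : Fin n → DiffPoly k n m) : IsDifferential (diffSubst P) := by
  intro i f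
  induction f using MvPolynomial.induction_on with
  | C a => rw [der_C, map_zero, ← algebraMap_eq, AlgHom.commutes, algebraMap_eq, der_C]
  | add f g hf hg => simp only [map_add, hf, hg]
  | mul_X f p ih =>
    simp only [Derivation.leibniz, smul_eq_mul, map_add, map_mul, ih, der_X, diffSubst_X,
      applyOp_add_single]

theorem subset_diffAdjoin (S : Set (DiffPoly k n m)) : S ⊆ diffAdjoin k S :=
  fun _ hs => Algebra.mem_sInf.mpr fun _ hT => hT.1 hs

theorem IsDifferential.apply_eq_of_mem_diffAdjoin {φ : DiffPoly k n m →ₐ[k] DiffPoly k n m}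
    (hφ : IsDifferential φ) {S : Set (DiffPoly k n m)} (hS : ∀ s ∈ S, φ s = s) {f : DiffPoly k n m}
    (hf : f ∈ diffAdjoin k S) : φ f = f := by
  have hle : diffAdjoin k S ≤ AlgHom.equalizer φ (AlgHom.id k _) :=
    sInf_le ⟨hS, fun i g hg => (hφ i g).trans (congrArg _ hg)⟩
  exact hle hf

theorem der_mem_supported (i : Fin m) {S : Set (Fin n × DOp m)}
    (hS : ∀ p ∈ S, (p.1, p.2 + Finsupp.single i 1) ∈ S) {f : DiffPoly k n m}
    (hf : f ∈ supported k S) : der k n m i f ∈ supported k S := by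
  rw [supported_eq_adjoin_X] at hf ⊢
  induction hf using Algebra.adjoin_induction with
  | mem _ hp =>
    obtain ⟨p, hp, rfl⟩ := hp
    rw [der_X]
    exact Algebra.subset_adjoin ⟨_, hS p hp, rfl⟩
  | algebraMap r => rw [Derivation.map_algebraMap]; exact zero_mem _
  | add f g _ _ hf hg => rw [map_add]; exact add_mem hf hg
  | mul f g hf' hg' hf hg =>
    rw [Derivation.leibniz, smul_eq_mul, smul_eq_mul]
    exact add_mem (mul_mem hf' hg) (mul_mem hg' hf)

end DiffPoly

section TwoVariables

variable {k : Type} [CommRing k] {m : ℕ}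

theorem algHom_ext_xx_yy {φ ψ : DiffPoly k 2 m →ₐ[k] DiffPoly k 2 m} (hφ : IsDifferential φ)
    (hψ : IsDifferential ψ) (hx : φ (xx k m) = ψ (xx k m)) (hy : φ (yy k m) = ψ (yy k m)) :
    φ = ψ :=
  algHom_ext_of_isDifferential hφ hψ (Fin.forall_fin_two.mpr ⟨hx, hy⟩)

noncomputable def xShift (q : DiffPoly k 2 m) : DiffPoly k 2 m →ₐ[k] DiffPoly k 2 m :=
  diffSubst ![xx k m + q, yy k m]

theorem isDifferential_xShift (q : DiffPoly k 2 m) : IsDifferential (xShift q) :=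
  isDifferential_diffSubst _

theorem xShift_xx (q : DiffPoly k 2 m) : xShift q (xx k m) = xx k m + q :=
  diffSubst_X_zero _ 0

theorem xShift_yy (q : DiffPoly k 2 m) : xShift q (yy k m) = yy k m :=
  diffSubst_X_zero _ 1

theorem xShift_apply_of_mem_diffAdjoin {q f : DiffPoly k 2 m} (hf : f ∈ diffAdjoin k {yy k m}) :
    xShift q f = f :=
  (isDifferential_xShift q).apply_eq_of_mem_diffAdjoin (by rintro _ rfl; exact xShift_yy q) hf

theorem xShift_comp (q : DiffPoly k 2 m) {q' : DiffPoly k 2 m} (hq' : q' ∈ diffAdjoin k {yy k m}) :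
    (xShift q).comp (xShift q') = xShift (q + q') :=
  algHom_ext_xx_yy ((isDifferential_xShift q).comp (isDifferential_xShift q'))
    (isDifferential_xShift _)
    (by rw [AlgHom.comp_apply, xShift_xx, map_add, xShift_xx,
      xShift_apply_of_mem_diffAdjoin hq', xShift_xx, add_assoc])
    (by rw [AlgHom.comp_apply, xShift_yy, xShift_yy, xShift_yy])

theorem xShift_zero : xShift (0 : DiffPoly k 2 m) = AlgHom.id k _ :=
  algHom_ext_xx_yy (isDifferential_xShift 0) (fun _ _ => rfl) (xShift_xx 0 |>.trans (add_zero _))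
    (xShift_yy 0)

noncomputable def xShiftEquiv (q : DiffPoly k 2 m) (hq : q ∈ diffAdjoin k {yy k m}) :
    DiffPoly k 2 m ≃ₐ[k] DiffPoly k 2 m :=
  AlgEquiv.ofAlgHom (xShift q) (xShift (-q))
    (by rw [xShift_comp q (neg_mem hq), add_neg_cancel, xShift_zero])
    (by rw [xShift_comp (-q) hq, neg_add_cancel, xShift_zero])

theorem xShiftEquiv_apply (q : DiffPoly k 2 m) (hq : q ∈ diffAdjoin k {yy k m})
    (f : DiffPoly k 2 m) : xShiftEquiv q hq f = xShift q f :=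
  rfl

theorem xShiftEquiv_inv_apply (q : DiffPoly k 2 m) (hq : q ∈ diffAdjoin k {yy k m})
    (f : DiffPoly k 2 m) : (xShiftEquiv q hq)⁻¹ f = xShift (-q) f :=
  rfl

theorem coeff_xx_eq_zero_of_mem_diffAdjoin {f : DiffPoly k 2 m} (hf : f ∈ diffAdjoin k {yy k m}) :
    coeff (Finsupp.single (0, 0) 1) f = 0 := by
  have hle : diffAdjoin k {yy k m} ≤ supported k {p | p.1 = 1} :=
    sInf_le ⟨by rintro _ rfl; exact Algebra.subset_adjoin ⟨(1, 0), rfl, rfl⟩,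
      fun i g hg => der_mem_supported i (fun _ hp => hp) hg⟩
  exact coeff_eq_zero_of_mem_supported (hle hf) (i := (0, 0)) (by simp) (by simp)

theorem dwt_eq (p : Fin 2 × DOp m) : dwt 2 m p = 1 + p.2.degree := rfl

theorem weight_dwt_lt_two_iff (s : (Fin 2 × DOp m) →₀ ℕ) :
    Finsupp.weight (dwt 2 m) s < 2 ↔
      s = 0 ∨ s = Finsupp.single (0, 0) 1 ∨ s = Finsupp.single (1, 0) 1 := by
  constructor
  · intro hs
    by_cases h0 : s = 0
    · exact Or.inl h0
    obtain ⟨p, hp⟩ := Finsupp.ne_iff.mp h0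
    have hsplit := Finsupp.weight_sub_single_add (w := dwt 2 m) hp
    rw [dwt_eq] at hsplit
    have hrest : s - Finsupp.single p 1 = 0 :=
      Finsupp.ext fun r => Nat.eq_zero_of_le_zero <|
        (Finsupp.le_weight (dwt 2 m) (by simp [dwt_eq]) _).trans (by omega)
    have hp2 : p.2 = 0 := (Finsupp.degree_eq_zero_iff _).mp (by omega)
    rw [← Finsupp.sub_add_single_one_cancel hp, hrest, zero_add]
    obtain ⟨j, θ⟩ := p
    obtain rfl : θ = 0 := hp2
    fin_cases j <;> simp
  · rintro (rfl | rfl | rfl) <;> simp [Finsupp.weight_single, dwt_eq]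

def LowComponentsVanish (q : DiffPoly k 2 m) : Prop :=
  ∀ d : ℕ, d < 2 → weightedHomogeneousComponent (dwt 2 m) d q = 0

theorem lowComponentsVanish_iff (q : DiffPoly k 2 m) :
    LowComponentsVanish q ↔ coeff 0 q = 0 ∧ coeff (Finsupp.single (0, 0) 1) q = 0 ∧
      coeff (Finsupp.single (1, 0) 1) q = 0 := by
  simp only [LowComponentsVanish, forall_weightedHomogeneousComponent_eq_zero_iff,
    weight_dwt_lt_two_iff, or_imp, forall_and, forall_eq]

theorem coeff_affine (a b c : k) :
    coeff 0 (C a * xx k m + C b * yy k m + C c) = c ∧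
      coeff (Finsupp.single (0, 0) 1) (C a * xx k m + C b * yy k m + C c) = a ∧
      coeff (Finsupp.single (1, 0) 1) (C a * xx k m + C b * yy k m + C c) = b := by
  simp [xx, yy, coeff_X, coeff_C, Finsupp.single_eq_single_iff,
    eq_comm (a := (0 : (Fin 2 × DOp m) →₀ ℕ))]

theorem LowComponentsVanish.eq_zero_of_eq_affine {r : DiffPoly k 2 m} (hr : LowComponentsVanish r)
    {a b c : k} (h : r = C a * xx k m + C b * yy k m + C c) : a = 0 ∧ b = 0 ∧ c = 0 := by
  obtain ⟨h0, hx, hy⟩ := (lowComponentsVanish_iff r).mp hr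
  obtain ⟨c0, cx, cy⟩ := coeff_affine (m := m) a b c
  rw [h] at h0 hx hy
  exact ⟨cx ▸ hx, cy ▸ hy, c0 ▸ h0⟩

theorem LowComponentsVanish.C_mul_sub_C_mul {q q' : DiffPoly k 2 m} (hq : LowComponentsVanish q)
    (hq' : LowComponentsVanish q') (a a' : k) : LowComponentsVanish (C a * q - C a' * q') :=
  fun d hd => by simp only [C_mul', map_sub, map_smul, hq d hd, hq' d hd, smul_zero, sub_zero]

theorem inB0_xShiftEquiv {q : DiffPoly k 2 m} (hq : q ∈ diffAdjoin k {yy k m})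
    (hlow : LowComponentsVanish q) :
    InB0 (xShiftEquiv q hq) :=
  ⟨isDifferential_xShift q, q, hq, hlow, xShift_xx q, xShift_yy q⟩

theorem InB0.exists_eq_xShiftEquiv {β : DiffPoly k 2 m ≃ₐ[k] DiffPoly k 2 m} (hβ : InB0 β) :
    ∃ q, ∃ hq : q ∈ diffAdjoin k {yy k m}, LowComponentsVanish q ∧ β = xShiftEquiv q hq := by
  obtain ⟨hβd, q, hq, hlow, hx, hy⟩ := hβ
  refine ⟨q, hq, hlow, AlgEquiv.coe_toAlgHom_injective ?_⟩
  exact algHom_ext_xx_yy hβd (isDifferential_xShift q) (hx.trans (xShift_xx q).symm)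
    (hy.trans (xShift_yy q).symm)

end TwoVariables

section Field

variable {k : Type} [Field k] {m : ℕ}

theorem InC.exists_apply_xx {μ : DiffPoly k 2 m ≃ₐ[k] DiffPoly k 2 m} (hμ : InC μ) :
    ∃ a b c : k, a ≠ 0 ∧ μ (xx k m) = C a * xx k m + C b * yy k m + C c := by
  obtain ⟨⟨-, a₁, b₁, c₁, a₂, b₂, c₂, hdet, hx, hy⟩, -, -, b, c, -, -, -, -, -, hy'⟩ := hμ
  have ha₂ : a₂ = 0 := by
    have h := congrArg (coeff (Finsupp.single (0, 0) 1)) (hy.symm.trans hy')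
    rwa [show C b * yy k m + C c = C 0 * xx k m + C b * yy k m + C c by simp,
      (coeff_affine a₂ b₂ c₂).2.1, (coeff_affine 0 b c).2.1] at h
  refine ⟨a₁, b₁, c₁, fun ha₁ => hdet ?_, hx⟩
  rw [ha₁, ha₂, zero_mul, zero_mul]

theorem eq_of_xShiftEquiv_mul_eq {q q' : DiffPoly k 2 m} (hq : q ∈ diffAdjoin k {yy k m})
    (hq' : q' ∈ diffAdjoin k {yy k m}) (hlow : LowComponentsVanish q)
    (hlow' : LowComponentsVanish q') {μ μ' : DiffPoly k 2 m ≃ₐ[k] DiffPoly k 2 m} (hμ : InC μ)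
    (hμ' : InC μ') (h : xShiftEquiv q hq * μ = xShiftEquiv q' hq' * μ') : q = q' := by
  obtain ⟨a, b, c, ha, hx⟩ := hμ.exists_apply_xx
  obtain ⟨a', b', c', -, hx'⟩ := hμ'.exists_apply_xx
  have hxx := congrArg (· (xx k m)) h
  simp only [AlgEquiv.mul_apply, hx, hx', map_add, map_mul, algHom_C, algebraMap_eq,
    xShiftEquiv_apply, xShift_xx, xShift_yy] at hxx
  have key : C a * q - C a' * q' = C (a' - a) * xx k m + C (b' - b) * yy k m + C (c' - c) := by
    simp only [C_sub]
    linear_combination hxx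
  obtain ⟨haa, hbb, hcc⟩ := (hlow.C_mul_sub_C_mul hlow' a a').eq_zero_of_eq_affine key
  rw [haa, hbb, hcc, C_0, zero_mul, zero_mul, add_zero, add_zero, sub_eq_zero.mp haa, ← mul_sub,
    mul_eq_zero, C_eq_zero] at key
  exact sub_eq_zero.mp (key.resolve_left ha)

theorem IsTriangular.exists_xShiftEquiv_inv_mul_inC {ψ : DiffPoly k 2 m ≃ₐ[k] DiffPoly k 2 m}
    (hψ : IsTriangular ψ) : ∃ q, ∃ hq : q ∈ diffAdjoin k {yy k m},
      LowComponentsVanish q ∧ InC ((xShiftEquiv q hq)⁻¹ * ψ) := by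
  obtain ⟨hψd, a, b, c, ha, hb, f, hf, hx, hy⟩ := hψ
  set b₁ := coeff (Finsupp.single (1, 0) 1) f
  set c₁ := coeff 0 f
  have hlin : C b₁ * yy k m + C c₁ ∈ diffAdjoin k {yy k m} :=
    add_mem (mul_mem (algebraMap_mem _ _) (subset_diffAdjoin _ rfl)) (algebraMap_mem _ _)
  set q := C a⁻¹ * (f - (C b₁ * yy k m + C c₁))
  have hq : q ∈ diffAdjoin k {yy k m} := mul_mem (algebraMap_mem _ _) (sub_mem hf hlin)
  have hlow : LowComponentsVanish q := by
    rw [lowComponentsVanish_iff]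
    simp [q, b₁, c₁, coeff_C_mul, yy, coeff_X, coeff_C, Finsupp.single_eq_single_iff,
      eq_comm (a := (0 : (Fin 2 × DOp m) →₀ ℕ)), coeff_xx_eq_zero_of_mem_diffAdjoin hf]
  have hCq : C a * q = f - (C b₁ * yy k m + C c₁) := by
    rw [← mul_assoc, ← C_mul, mul_inv_cancel₀ ha, C_1, one_mul]
  have hμx : ((xShiftEquiv q hq)⁻¹ * ψ) (xx k m) = C a * xx k m + C b₁ * yy k m + C c₁ := by
    rw [AlgEquiv.mul_apply, hx, xShiftEquiv_inv_apply, map_add, map_mul, algHom_C, algebraMap_eq,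
      xShift_xx, xShift_apply_of_mem_diffAdjoin hf]
    linear_combination -hCq
  have hμy : ((xShiftEquiv q hq)⁻¹ * ψ) (yy k m) = C b * yy k m + C c := by
    rw [AlgEquiv.mul_apply, hy, xShiftEquiv_inv_apply, map_add, map_mul, algHom_C, algHom_C,
      algebraMap_eq, xShift_yy]
  have hμd : IsDiffAut ((xShiftEquiv q hq)⁻¹ * ψ) := (isDifferential_xShift (-q)).comp hψd
  refine ⟨q, hq, hlow, ⟨hμd, a, b₁, c₁, 0, b, c, by simpa using mul_ne_zero ha hb, hμx, ?_⟩,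
    hμd, a, b, c, ha, hb, _, hlin, by rw [hμx, add_assoc], hμy⟩
  rw [hμy, C_0, zero_mul, zero_add]

end Field

theorem stmt5_general {k : Type} [Field k] {m : ℕ}
    (ψ : DiffPoly k 2 m ≃ₐ[k] DiffPoly k 2 m) (hψ : IsTriangular ψ) :
    ∃! p : (DiffPoly k 2 m ≃ₐ[k] DiffPoly k 2 m) × (DiffPoly k 2 m ≃ₐ[k] DiffPoly k 2 m),
      InB0 p.1 ∧ InC p.2 ∧ ψ = p.1 * p.2 := by
  obtain ⟨q, hq, hlow, hμ⟩ := hψ.exists_xShiftEquiv_inv_mul_inC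
  have hψq : ψ = xShiftEquiv q hq * ((xShiftEquiv q hq)⁻¹ * ψ) := (mul_inv_cancel_left _ _).symm
  refine ⟨(_, _), ⟨inB0_xShiftEquiv hq hlow, hμ, hψq⟩, ?_⟩
  rintro ⟨β, μ⟩ ⟨hβ, hμ', hψ'⟩
  obtain ⟨q', hq', hlow', rfl⟩ := hβ.exists_eq_xShiftEquiv
  obtain rfl : q' = q := eq_of_xShiftEquiv_mul_eq hq' hq hlow' hlow hμ' hμ (hψ'.symm.trans hψq)
  exact Prod.ext rfl (mul_left_cancel (hψ'.symm.trans hψq))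

/-- `B₀ = {(x+q(y), y) : q has all homogeneous components of degree ≥ 2}` is a complete
and irredundant system of representatives of the left cosets of `C = Af₂(A) ∩ Tr₂(A)` in
`Tr₂(A)`: every triangular automorphism factors uniquely as `β ∘ μ`, `β ∈ B₀`, `μ ∈ C`. -/
theorem stmt5 {k : Type} [Field k] [CharZero k] {m : ℕ}
    (ψ : DiffPoly k 2 m ≃ₐ[k] DiffPoly k 2 m) (hψ : IsTriangular ψ) :
    ∃! p : (DiffPoly k 2 m ≃ₐ[k] DiffPoly k 2 m) × (DiffPoly k 2 m ≃ₐ[k] DiffPoly k 2 m),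
      InB0 p.1 ∧ InC p.2 ∧ ψ = p.1 * p.2 :=
  stmt5_general ψ hψ
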